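/- Let X and Y be nontrivial real Banach spaces, and let H be a closed linear subspace of L(X,Y) containing all finite rank operators. Suppose the dual space X* is non-rough and alternatively octahedral. Then H (with the induced operator norm) is octahedral if and only if Y is octahedral. -/

import Mathlib

open scoped BigOperators

/-- A Banach space `Z` is `δ`-average rough. -/
def IsAverageRough (Z : Type*) [NormedAddCommGroup Z] (δ : ℝ) : Prop :=
  ∀ n : ℕ, 0 < n → ∀ x : Fin n → Z, (∀ i, ‖x i‖ = 1) →
    ∀ ε > (0 : ℝ), ∀ η > (0 : ℝ), ∃ y : Z, 0 < ‖y‖ ∧ ‖y‖ < η ∧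
      (δ - ε) * ‖y‖ ≤ (1 / (n : ℝ)) * ∑ i, (‖x i + y‖ + ‖x i - y‖) - 2

/-- A Banach space `Z` is `δ`-rough. -/
def IsRough (Z : Type*) [NormedAddCommGroup Z] (δ : ℝ) : Prop :=
  ∀ x : Z, ‖x‖ = 1 →
    ∀ ε > (0 : ℝ), ∀ η > (0 : ℝ), ∃ y : Z, 0 < ‖y‖ ∧ ‖y‖ < η ∧
      (δ - ε) * ‖y‖ ≤ ‖x + y‖ + ‖x - y‖ - 2

/-- A Banach space `Z` is non-rough if it is `ε`-rough for no `ε > 0`. -/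
def NonRough (Z : Type*) [NormedAddCommGroup Z] : Prop :=
  ¬ ∃ ε > (0 : ℝ), IsRough Z ε

/-- A Banach space `Z` is octahedral. -/
def Octahedral (Z : Type*) [NormedAddCommGroup Z] : Prop :=
  ∀ (n : ℕ) (x : Fin n → Z), (∀ i, ‖x i‖ = 1) →
    ∀ ε > (0 : ℝ), ∃ y : Z, ‖y‖ = 1 ∧ ∀ i, 2 - ε ≤ ‖x i + y‖

/-- A Banach space `Z` is alternatively octahedral. -/
def AlternativelyOctahedral (Z : Type*) [NormedAddCommGroup Z] : Prop :=
  ∀ (n : ℕ) (x : Fin n → Z), (∀ i, ‖x i‖ = 1) →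
    ∀ ε > (0 : ℝ), ∃ y : Z, ‖y‖ = 1 ∧ ∀ i, 2 - ε ≤ max ‖x i + y‖ ‖x i - y‖

/-- A Banach space `X` is weakly `δ`-average rough: every non-empty relatively weak*
open subset of the closed unit ball of the dual has diameter at least `δ`. -/
def WeaklyAverageRough (X : Type*) [NormedAddCommGroup X] [NormedSpace ℝ X] (δ : ℝ) : Prop :=
  ∀ V : Set (WeakDual ℝ X), IsOpen V →
    ∀ U : Set (StrongDual ℝ X),
      U = {f : StrongDual ℝ X | ‖f‖ ≤ 1} ∩
            {f : StrongDual ℝ X | StrongDual.toWeakDual f ∈ V} →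
      U.Nonempty → δ ≤ Metric.diam U

/-!
If `X*` is not rough, some norm-one `f ∈ X*` has slices `{x ∈ B_X : f x > 1 - α}` of arbitrarily
small diameter. Given unit vectors `yᵢ ∈ Y`, octahedrality of `H` applied to the rank-one
operators `f ⊗ yᵢ` yields `S ∈ S_H` and points `wᵢ` of one thin slice almost norming `f ⊗ yᵢ + S`;
then `S wᵢ` is nearly independent of `i` and makes `Y` octahedral.

Conversely, given `Tᵢ ∈ S_H`, pick norm-one `fᵢ ∈ X*` with `‖Tᵢ z‖ ≳ fᵢ z`, and use alternative
octahedrality of `X*` to find `g ∈ S_{X*}` and points `zᵢ ∈ B_X` with `fᵢ zᵢ ≈ 1 ≈ |g zᵢ|`.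
Octahedrality of `Y` applied to the vectors `Tᵢ (±zᵢ)` gives `y`, and `g ⊗ y ∈ H` does the job.
-/

open ContinuousLinearMap

section Octahedral

variable {Z : Type*} [NormedAddCommGroup Z] [NormedSpace ℝ Z]

lemma norm_inv_norm_smul_sub_self {x : Z} (hx : x ≠ 0) : ‖‖x‖⁻¹ • x - x‖ = |1 - ‖x‖| := by
  have hx' : 0 < ‖x‖ := norm_pos_iff.2 hx
  rw [show ‖x‖⁻¹ • x - x = (‖x‖⁻¹ - 1) • x by rw [sub_smul, one_smul], norm_smul,
    Real.norm_eq_abs]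
  calc |‖x‖⁻¹ - 1| * ‖x‖ = |(‖x‖⁻¹ - 1) * ‖x‖| := by rw [abs_mul, abs_norm]
    _ = |1 - ‖x‖| := by rw [sub_mul, inv_mul_cancel₀ hx'.ne', one_mul]

lemma Octahedral.exists_norm_add_add_one_sub_le (hZ : Octahedral Z) {n : ℕ} (x : Fin n → Z)
    (hx₀ : ∀ i, x i ≠ 0) (hx₁ : ∀ i, ‖x i‖ ≤ 1) {ε : ℝ} (hε : 0 < ε) :
    ∃ y : Z, ‖y‖ = 1 ∧ ∀ i, ‖x i‖ + 1 - ε ≤ ‖x i + y‖ := by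
  obtain ⟨y, hy, hxy⟩ := hZ n (fun i => ‖x i‖⁻¹ • x i) (fun i => norm_smul_inv_norm (hx₀ i)) ε hε
  refine ⟨y, hy, fun i => ?_⟩
  have h := norm_sub_norm_le (‖x i‖⁻¹ • x i + y) (‖x i‖⁻¹ • x i - x i)
  rw [norm_inv_norm_smul_sub_self (hx₀ i), abs_of_nonneg (sub_nonneg.2 (hx₁ i)),
    show ‖x i‖⁻¹ • x i + y - (‖x i‖⁻¹ • x i - x i) = x i + y by abel] at h
  linarith [hxy i]

lemma octahedral_of_exists_norm_le_one [Nontrivial Z]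
    (h : ∀ (n : ℕ) (x : Fin n → Z), (∀ i, ‖x i‖ = 1) →
      ∀ ε > (0 : ℝ), ∃ z : Z, ‖z‖ ≤ 1 ∧ ∀ i, 2 - ε ≤ ‖x i + z‖) :
    Octahedral Z := by
  intro n x hx ε hε
  rcases isEmpty_or_nonempty (Fin n) with hn | ⟨⟨i₀⟩⟩
  · obtain ⟨v, hv⟩ := exists_ne (0 : Z)
    exact ⟨‖v‖⁻¹ • v, norm_smul_inv_norm hv, isEmptyElim⟩
  set η := min (ε / 2) (1 / 2)
  have hη : 0 < η := by positivity
  have hηε : η ≤ ε / 2 := min_le_left _ _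
  have hη₁ : η ≤ 1 / 2 := min_le_right _ _
  obtain ⟨z, hz₁, hxz⟩ := h n x hx η hη
  have hz : 1 - η ≤ ‖z‖ := by
    have := norm_add_le (x i₀) z
    linarith [hxz i₀, hx i₀]
  have hz₀ : z ≠ 0 := norm_pos_iff.1 (by linarith)
  refine ⟨‖z‖⁻¹ • z, norm_smul_inv_norm hz₀, fun i => ?_⟩
  have h' := norm_sub_norm_le (x i + z) (z - ‖z‖⁻¹ • z)
  rw [norm_sub_rev z, norm_inv_norm_smul_sub_self hz₀, abs_of_nonneg (sub_nonneg.2 hz₁),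
    show x i + z - (z - ‖z‖⁻¹ • z) = x i + ‖z‖⁻¹ • z by abel] at h'
  linarith [hxz i]

end Octahedral

section Dual

variable {X : Type*} [NormedAddCommGroup X] [NormedSpace ℝ X]

lemma apply_le_opNorm_of_norm_le_one (φ : StrongDual ℝ X) {x : X} (hx : ‖x‖ ≤ 1) : φ x ≤ ‖φ‖ :=
  (Real.le_norm_self _).trans (φ.unit_le_opNorm x hx)

lemma exists_eq_or_eq_neg_apply_eq_abs (φ : StrongDual ℝ X) (x : X) :
    ∃ w, (w = x ∨ w = -x) ∧ φ w = |φ x| := by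
  rcases abs_cases (φ x) with ⟨h, -⟩ | ⟨h, -⟩
  · exact ⟨x, .inl rfl, h.symm⟩
  · exact ⟨-x, .inr rfl, by rw [map_neg, h]⟩

lemma exists_lt_apply_of_two_sub_lt_norm_add {f g : StrongDual ℝ X} (hf : ‖f‖ ≤ 1)
    (hg : ‖g‖ ≤ 1) {η : ℝ} (h : 2 - η < ‖f + g‖) :
    ∃ z : X, ‖z‖ ≤ 1 ∧ 1 - η < f z ∧ 1 - η < g z := by
  obtain ⟨x, hx, hfgx⟩ := (f + g).exists_lt_apply_of_lt_opNorm h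
  obtain ⟨z, hzx, hz⟩ := exists_eq_or_eq_neg_apply_eq_abs (f + g) x
  have hz₁ : ‖z‖ ≤ 1 := by rcases hzx with rfl | rfl <;> simpa using hx.le
  rw [Real.norm_eq_abs, ← hz, add_apply] at hfgx
  exact ⟨z, hz₁, by linarith [apply_le_opNorm_of_norm_le_one g hz₁],
    by linarith [apply_le_opNorm_of_norm_le_one f hz₁]⟩

lemma AlternativelyOctahedral.exists_forall_exists_lt_apply_lt_abs_apply
    (hX : AlternativelyOctahedral (StrongDual ℝ X)) {n : ℕ} (f : Fin n → StrongDual ℝ X)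
    (hf : ∀ i, ‖f i‖ = 1) {η : ℝ} (hη : 0 < η) :
    ∃ g : StrongDual ℝ X, ‖g‖ = 1 ∧ ∀ i, ∃ z : X, ‖z‖ ≤ 1 ∧ 1 - η < f i z ∧ 1 - η < |g z| := by
  obtain ⟨g, hg, hfg⟩ := hX n f hf (η / 2) (half_pos hη)
  refine ⟨g, hg, fun i => ?_⟩
  rcases lt_max_iff.1 (show 2 - η < max ‖f i + g‖ ‖f i - g‖ by linarith [hfg i]) with h | h
  · obtain ⟨z, hz, hfz, hgz⟩ := exists_lt_apply_of_two_sub_lt_norm_add (hf i).le hg.le h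
    exact ⟨z, hz, hfz, hgz.trans_le (le_abs_self _)⟩
  · rw [sub_eq_add_neg] at h
    obtain ⟨z, hz, hfz, hgz⟩ :=
      exists_lt_apply_of_two_sub_lt_norm_add (hf i).le ((norm_neg g).trans_le hg.le) h
    rw [neg_apply] at hgz
    exact ⟨z, hz, hfz, hgz.trans_le (neg_le_abs _)⟩

lemma apply_sub_le_norm_add_add_norm_sub (f g : StrongDual ℝ X) {x x' : X} (hx : ‖x‖ ≤ 1)
    (hx' : ‖x'‖ ≤ 1) : g (x - x') ≤ ‖f + g‖ + ‖f - g‖ - f x - f x' := by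
  have h₁ := apply_le_opNorm_of_norm_le_one (f + g) hx
  have h₂ := apply_le_opNorm_of_norm_le_one (f - g) hx'
  rw [add_apply] at h₁
  rw [sub_apply] at h₂
  rw [map_sub]
  linarith

lemma exists_norm_add_add_norm_sub_lt_of_nonRough {Z : Type*} [NormedAddCommGroup Z]
    (h : NonRough Z) {δ : ℝ} (hδ : 0 < δ) :
    ∃ f : Z, ‖f‖ = 1 ∧ ∃ η > 0, ∀ g : Z, 0 < ‖g‖ → ‖g‖ < η →
      ‖f + g‖ + ‖f - g‖ - 2 < δ * ‖g‖ := by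
  have hδ' : ¬ IsRough Z δ := fun hr => h ⟨δ, hδ, hr⟩
  simp only [IsRough, not_forall, not_exists, not_and, not_le] at hδ'
  obtain ⟨f, hf, ε, hε, η, hη, hfg⟩ := hδ'
  exact ⟨f, hf, η, hη, fun g hg₀ hgη =>
    (hfg g hg₀ hgη).trans_le (mul_le_mul_of_nonneg_right (by linarith) hg₀.le)⟩

lemma apply_sub_le_of_norm_add_add_norm_sub_lt {f : StrongDual ℝ X} {δ η : ℝ} (hη : 0 < η)
    (hf : ∀ g : StrongDual ℝ X, 0 < ‖g‖ → ‖g‖ < η → ‖f + g‖ + ‖f - g‖ - 2 < δ / 2 * ‖g‖)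
    {x x' : X} (hx : ‖x‖ ≤ 1) (hx' : ‖x'‖ ≤ 1) (hfx : 1 - δ * η / 8 < f x)
    (hfx' : 1 - δ * η / 8 < f x') (u : StrongDual ℝ X) : u (x - x') ≤ δ * ‖u‖ := by
  rcases eq_or_ne u 0 with rfl | hu
  · simp
  have hu' : 0 < ‖u‖ := norm_pos_iff.2 hu
  set c := η / 2 / ‖u‖
  have hc : 0 < c := by positivity
  have hcu : c * ‖u‖ = η / 2 := div_mul_cancel₀ _ hu'.ne'
  have hcu' : ‖c • u‖ = η / 2 := by rw [norm_smul, Real.norm_of_nonneg hc.le, hcu]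
  have h₁ := hf (c • u) (by rw [hcu']; positivity) (by rw [hcu']; linarith)
  have h₂ := apply_sub_le_norm_add_add_norm_sub f (c • u) hx hx'
  rw [hcu'] at h₁
  rw [smul_apply, smul_eq_mul] at h₂
  have key : c * u (x - x') < c * (δ * ‖u‖) := by
    rw [mul_left_comm, hcu]
    linarith
  exact (lt_of_mul_lt_mul_left key hc.le).le

lemma exists_slice_diam_le_of_nonRough (h : NonRough (StrongDual ℝ X)) {δ : ℝ} (hδ : 0 < δ) :
    ∃ f : StrongDual ℝ X, ‖f‖ = 1 ∧ ∃ α > 0, ∀ x x' : X, ‖x‖ ≤ 1 → ‖x'‖ ≤ 1 →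
      1 - α < f x → 1 - α < f x' → ‖x - x'‖ ≤ δ := by
  obtain ⟨f, hf, η, hη, hfg⟩ := exists_norm_add_add_norm_sub_lt_of_nonRough h (half_pos hδ)
  refine ⟨f, hf, δ * η / 8, by positivity, fun x x' hx hx' hfx hfx' => ?_⟩
  refine NormedSpace.norm_le_dual_bound ℝ _ hδ.le fun u => ?_
  rw [Real.norm_eq_abs, abs_le]
  constructor
  · have := apply_sub_le_of_norm_add_add_norm_sub_lt hη hfg hx' hx hfx' hfx u
    rw [← neg_sub, map_neg] at this
    linarith
  · exact apply_sub_le_of_norm_add_add_norm_sub_lt hη hfg hx hx' hfx hfx' u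

end Dual

section Operators

variable {X Y : Type*} [NormedAddCommGroup X] [NormedSpace ℝ X] [NormedAddCommGroup Y]
  [NormedSpace ℝ Y]

lemma finiteDimensional_range_smulRight (f : StrongDual ℝ X) (y : Y) :
    FiniteDimensional ℝ (LinearMap.range ((f.smulRight y : X →L[ℝ] Y) : X →ₗ[ℝ] Y)) := by
  have hle : LinearMap.range ((f.smulRight y : X →L[ℝ] Y) : X →ₗ[ℝ] Y) ≤ ℝ ∙ y := by
    rintro v ⟨x, rfl⟩
    exact Submodule.mem_span_singleton.2 ⟨f x, rfl⟩
  exact Submodule.finiteDimensional_of_le hle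

lemma exists_dual_mul_apply_le_norm_apply (T : X →L[ℝ] Y) {c : ℝ} (hc : 0 ≤ c)
    (hcT : c < ‖T‖) : ∃ f : StrongDual ℝ X, ‖f‖ = 1 ∧ ∀ z, c * f z ≤ ‖T z‖ := by
  obtain ⟨x, hx, hTx⟩ := T.exists_lt_apply_of_lt_opNorm hcT
  obtain ⟨h, hh, hhTx⟩ := exists_dual_vector ℝ (T x) (by linarith [norm_nonneg (T x)])
  set φ := h.comp T
  have hφ : c < ‖φ‖ := by
    have := apply_le_opNorm_of_norm_le_one φ hx.le
    rw [comp_apply, hhTx] at this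
    exact hTx.trans_le this
  have hφ₀ : φ ≠ 0 := norm_pos_iff.1 (hc.trans_lt hφ)
  refine ⟨‖φ‖⁻¹ • φ, norm_smul_inv_norm hφ₀, fun z => ?_⟩
  have hφz : φ z ≤ ‖T z‖ :=
    (Real.le_norm_self _).trans ((h.le_opNorm (T z)).trans_eq (by rw [hh, one_mul]))
  rw [smul_apply, smul_eq_mul]
  rcases le_or_gt 0 (φ z) with hz | hz
  · calc c * (‖φ‖⁻¹ * φ z) ≤ ‖φ‖ * (‖φ‖⁻¹ * φ z) := by gcongr
      _ = φ z := mul_inv_cancel_left₀ (norm_ne_zero_iff.2 hφ₀) _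
      _ ≤ ‖T z‖ := hφz
  · have : ‖φ‖⁻¹ * φ z ≤ 0 := mul_nonpos_of_nonneg_of_nonpos (by positivity) hz.le
    exact (mul_nonpos_of_nonneg_of_nonpos hc this).trans (norm_nonneg _)

lemma exists_lt_apply_of_lt_norm_smulRight_add {f : StrongDual ℝ X} {y : Y}
    (hy : ‖y‖ = 1) {S : X →L[ℝ] Y} (hS : ‖S‖ ≤ 1) {α : ℝ} (h : 2 - α < ‖f.smulRight y + S‖) :
    ∃ w : X, ‖w‖ ≤ 1 ∧ 1 - α < f w ∧ 2 - α < ‖f w • y + S w‖ := by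
  obtain ⟨x, hx, hfSx⟩ := (f.smulRight y + S).exists_lt_apply_of_lt_opNorm h
  obtain ⟨w, hwx, hfw⟩ := exists_eq_or_eq_neg_apply_eq_abs f x
  have hw : ‖w‖ ≤ 1 ∧ 2 - α < ‖f w • y + S w‖ := by
    rcases hwx with rfl | rfl
    · simpa using ⟨hx.le, hfSx⟩
    · rw [map_neg, map_neg, neg_smul, ← neg_add, norm_neg, norm_neg]
      simpa using ⟨hx.le, hfSx⟩
  have hle : ‖f w • y + S w‖ ≤ f w + 1 := by
    calc ‖f w • y + S w‖ ≤ ‖f w • y‖ + ‖S w‖ := norm_add_le _ _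
      _ ≤ f w + 1 := by
        rw [norm_smul, hy, mul_one, Real.norm_eq_abs, hfw, abs_abs, ← hfw]
        gcongr
        exact (S.unit_le_opNorm w hw.1).trans hS
  exact ⟨w, hw.1, by linarith [hw.2], hw.2⟩

theorem octahedral_of_octahedral_submodule [Nontrivial Y] (hX : NonRough (StrongDual ℝ X))
    {H : Submodule ℝ (X →L[ℝ] Y)} (hH : ∀ (f : StrongDual ℝ X) (y : Y), f.smulRight y ∈ H)
    (hoct : Octahedral H) : Octahedral Y := by
  refine octahedral_of_exists_norm_le_one fun n y hy ε hε => ?_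
  rcases isEmpty_or_nonempty (Fin n) with _ | ⟨⟨i₀⟩⟩
  · exact ⟨0, by simp, isEmptyElim⟩
  obtain ⟨f, hf, α₀, hα₀, hslice⟩ := exists_slice_diam_le_of_nonRough hX (half_pos hε)
  set α := min α₀ (ε / 4)
  have hα : 0 < α := by positivity
  have hαε : α ≤ ε / 4 := min_le_right _ _
  obtain ⟨⟨S, _⟩, hS, hfyS⟩ := hoct n (fun i => ⟨f.smulRight (y i), hH f (y i)⟩)
    (fun i => (norm_smulRight_apply f (y i)).trans (by rw [hf, hy i, one_mul])) (α / 2)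
    (half_pos hα)
  have hS₁ : ‖S‖ ≤ 1 := hS.le
  choose w hw hfw hfwS using fun i => exists_lt_apply_of_lt_norm_smulRight_add (hy i) hS₁
    ((by linarith : 2 - α < 2 - α / 2).trans_le (hfyS i))
  refine ⟨S (w i₀), (S.unit_le_opNorm _ (hw i₀)).trans hS₁, fun i => ?_⟩
  have hSw : ‖S (w i) - S (w i₀)‖ ≤ ε / 2 := by
    rw [← map_sub]
    refine (S.le_opNorm _).trans ?_
    have := hslice (w i) (w i₀) (hw i) (hw i₀) ((sub_le_sub_left (min_le_left _ _) _).trans_lt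
      (hfw i)) ((sub_le_sub_left (min_le_left _ _) _).trans_lt (hfw i₀))
    nlinarith [norm_nonneg (w i - w i₀)]
  have hfwy : ‖(f (w i) - 1) • y i‖ ≤ α := by
    rw [norm_smul, hy i, mul_one, Real.norm_eq_abs, abs_le]
    constructor <;> linarith [hfw i, apply_le_opNorm_of_norm_le_one f (hw i)]
  have := norm_add₃_le (a := y i + S (w i₀)) (b := (f (w i) - 1) • y i) (c := S (w i) - S (w i₀))
  rw [show y i + S (w i₀) + (f (w i) - 1) • y i + (S (w i) - S (w i₀)) = f (w i) • y i + S (w i)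
    by rw [sub_smul, one_smul]; abel] at this
  linarith [hfwS i]

theorem octahedral_submodule_of_octahedral (hX : AlternativelyOctahedral (StrongDual ℝ X))
    {H : Submodule ℝ (X →L[ℝ] Y)} (hH : ∀ (f : StrongDual ℝ X) (y : Y), f.smulRight y ∈ H)
    (hY : Octahedral Y) : Octahedral H := by
  intro n T hT ε hε
  set η := min (ε / 4) (1 / 2)
  have hη : 0 < η := by positivity
  have hηε : η ≤ ε / 4 := min_le_left _ _
  have hη₁ : η ≤ 1 / 2 := min_le_right _ _
  have hT₁ : ∀ i, ‖(T i : X →L[ℝ] Y)‖ = 1 := hT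
  choose f hf hfT using fun i => exists_dual_mul_apply_le_norm_apply (T i : X →L[ℝ] Y)
    (c := 1 - η) (by linarith) (by rw [hT₁ i]; linarith)
  obtain ⟨g, hg, hfg⟩ := hX.exists_forall_exists_lt_apply_lt_abs_apply f hf hη
  choose z hz hfz hgz using hfg
  choose w hwz hgw using fun i => exists_eq_or_eq_neg_apply_eq_abs g (z i)
  have hw : ∀ i, ‖w i‖ ≤ 1 ∧ (1 - η) * (1 - η) ≤ ‖(T i : X →L[ℝ] Y) (w i)‖ := by
    intro i
    have := (mul_le_mul_of_nonneg_left (hfz i).le (by linarith)).trans (hfT i (z i))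
    rcases hwz i with h | h <;> simpa [h] using ⟨hz i, this⟩
  have hTw₁ : ∀ i, ‖(T i : X →L[ℝ] Y) (w i)‖ ≤ 1 := fun i =>
    ((T i : X →L[ℝ] Y).unit_le_opNorm _ (hw i).1).trans (hT₁ i).le
  have hTw₀ : ∀ i, (T i : X →L[ℝ] Y) (w i) ≠ 0 := fun i =>
    norm_pos_iff.1 ((by nlinarith : (0 : ℝ) < (1 - η) * (1 - η)).trans_le (hw i).2)
  obtain ⟨y, hy, hTwy⟩ := hY.exists_norm_add_add_one_sub_le _ hTw₀ hTw₁ hη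
  refine ⟨⟨g.smulRight y, hH g y⟩, (norm_smulRight_apply g y).trans (by rw [hg, hy, one_mul]),
    fun i => ?_⟩
  have hgw₁ : g (w i) ≤ 1 := hg ▸ apply_le_opNorm_of_norm_le_one g (hw i).1
  have hgy : ‖(1 - g (w i)) • y‖ ≤ η := by
    rw [norm_smul, hy, mul_one, Real.norm_of_nonneg (by linarith)]
    linarith [hgz i, hgw i]
  have := norm_add_le ((T i : X →L[ℝ] Y) (w i) + g (w i) • y) ((1 - g (w i)) • y)
  rw [show (T i : X →L[ℝ] Y) (w i) + g (w i) • y + (1 - g (w i)) • y =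
    (T i : X →L[ℝ] Y) (w i) + y by rw [sub_smul, one_smul]; abel] at this
  calc 2 - ε ≤ ‖(T i : X →L[ℝ] Y) (w i) + g (w i) • y‖ := by nlinarith [hTwy i, (hw i).2]
    _ = ‖((T i : X →L[ℝ] Y) + g.smulRight y) (w i)‖ := by simp
    _ ≤ ‖(T i : X →L[ℝ] Y) + g.smulRight y‖ := unit_le_opNorm _ _ (hw i).1

end Operators

theorem stmt12_general
    (X Y : Type*) [NormedAddCommGroup X] [NormedSpace ℝ X]
    [NormedAddCommGroup Y] [NormedSpace ℝ Y] [Nontrivial Y]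
    (H : Submodule ℝ (X →L[ℝ] Y))
    (hHfin : ∀ T : X →L[ℝ] Y, FiniteDimensional ℝ (LinearMap.range (T : X →ₗ[ℝ] Y)) → T ∈ H)
    
    (hX1 : NonRough (StrongDual ℝ X)) (hX2 : AlternativelyOctahedral (StrongDual ℝ X)) :
    (Octahedral H ↔ Octahedral Y) := by
  have hH : ∀ (f : StrongDual ℝ X) (y : Y), f.smulRight y ∈ H := fun f y =>
    hHfin _ (finiteDimensional_range_smulRight f y)
  exact ⟨octahedral_of_octahedral_submodule hX1 hH, octahedral_submodule_of_octahedral hX2 hH⟩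

theorem stmt12
    (X Y : Type*) [NormedAddCommGroup X] [NormedSpace ℝ X] [CompleteSpace X] [Nontrivial X]
    [NormedAddCommGroup Y] [NormedSpace ℝ Y] [CompleteSpace Y] [Nontrivial Y]
    (H : Submodule ℝ (X →L[ℝ] Y)) (hHclosed : IsClosed (H : Set (X →L[ℝ] Y)))
    (hHfin : ∀ T : X →L[ℝ] Y, FiniteDimensional ℝ (LinearMap.range (T : X →ₗ[ℝ] Y)) → T ∈ H)
    
    (hX1 : NonRough (StrongDual ℝ X)) (hX2 : AlternativelyOctahedral (StrongDual ℝ X)) :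
    (Octahedral H ↔ Octahedral Y) :=
  stmt12_general X Y H hHfin hX1 hX2
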